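/- arXiv:1702.08664 — 2 statements merged into one kernel-verified Lean document; each statement's English description precedes it below -/
import Mathlib

section
/- Every normal triangular set N = [N_1,...,N_r] in K[x_1,...,x_n] has the projection property: for each i = 0,...,r−1, every common zero (in the algebraic closure of K) of [N_1,...,N_i] that avoids the zeros of all initials of N extends to a zero of the whole set N avoiding the zeros of all initials of N. -/
open MvPolynomial

namespace CharDec

variable {K : Type*} [Field K] {σ : Type*} [LinearOrder σ]

/-- Lexicographic comparison of exponent vectors (larger variables dominate):
`a ≤ b` iff `a = b` or at the greatest index where they differ, `a` is smaller. -/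
def lexLe (a b : σ →₀ ℕ) : Prop :=
  a = b ∨ ∃ i : σ, a i < b i ∧ ∀ j : σ, i < j → a j = b j

/-- `m` is the leading monomial of `f` with respect to the lex term ordering. -/
def IsLeadMon (f : MvPolynomial σ K) (m : σ →₀ ℕ) : Prop :=
  m ∈ f.support ∧ ∀ m' ∈ f.support, lexLe m' m

/-- `f` has leading (greatest actually occurring) variable `i`. -/
def HasLV (f : MvPolynomial σ K) (i : σ) : Prop :=
  i ∈ f.vars ∧ ∀ j ∈ f.vars, j ≤ i

/-- The coefficient of `(X i) ^ d` in `f`, as a polynomial in the remaining variables. -/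
noncomputable def coeffWrt (i : σ) (d : ℕ) (f : MvPolynomial σ K) :
    MvPolynomial σ K :=
  ∑ m ∈ f.support.filter (fun m => m i = d), monomial (m.update i 0) (f.coeff m)

/-- The initial (leading coefficient in the leading variable) of `f` with
respect to the variable `i`. -/
noncomputable def initialWrt (i : σ) (f : MvPolynomial σ K) : MvPolynomial σ K :=
  coeffWrt i (f.degreeOf i) f

/-- `R` is the pseudo-remainder of `P` on pseudo-division by `Q` with respect
to the variable `y` (classical pseudo-division, with the exponent
`deg P - deg Q + 1` when `deg P ≥ deg Q`, and `0` otherwise). -/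
def IsPrem (y : σ) (Q P R : MvPolynomial σ K) : Prop :=
  ∃ A : MvPolynomial σ K,
    (initialWrt y Q) ^ (P.degreeOf y + 1 - Q.degreeOf y) * P = A * Q + R ∧
    R.degreeOf y < Q.degreeOf y

/-- `IterPrem P L R` : `R` is the iterated pseudo-remainder of `P` by the
list `L` of pairs (leading variable, divisor), divisors being used from the
head of the list on. -/
def IterPrem : MvPolynomial σ K → List (σ × MvPolynomial σ K) →
    MvPolynomial σ K → Prop
  | P, [], R => R = P
  | P, e :: L, R => ∃ S, IsPrem e.1 e.2 P S ∧ IterPrem S L R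

/-- A triangular set: a list of (leading variable, polynomial) pairs with
strictly increasing leading variables. -/
structure TriSet (K : Type*) [Field K] (σ : Type*) [LinearOrder σ] where
  elems : List (σ × MvPolynomial σ K)
  sorted : elems.Pairwise (fun e e' => e.1 < e'.1)
  hlv : ∀ e ∈ elems, HasLV e.2 e.1

namespace TriSet

/-- The list of leading variables of a triangular set. -/
def lvs (T : TriSet K σ) : List σ := T.elems.map Prod.fst

/-- The list of polynomials of a triangular set. -/
def polys (T : TriSet K σ) : List (MvPolynomial σ K) := T.elems.map Prod.snd

/-- A variable is a parameter of `T` if it is not a leading variable of `T`. -/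
def IsParam (T : TriSet K σ) (j : σ) : Prop := j ∉ T.lvs

/-- `T` is normal: every initial involves only the parameters of `T`. -/
def Normal (T : TriSet K σ) : Prop :=
  ∀ e ∈ T.elems, ∀ j ∈ (initialWrt e.1 e.2).vars, T.IsParam j

/-- `T` is zero-dimensional: every variable is a leading variable of `T`. -/
def ZeroDim (T : TriSet K σ) : Prop := ∀ i : σ, i ∈ T.lvs

/-- The product of the initials of `T`. -/
noncomputable def prodInit (T : TriSet K σ) : MvPolynomial σ K :=
  (T.elems.map fun e => initialWrt e.1 e.2).prod

/-- The ideal generated by the polynomials of `T`. -/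
noncomputable def ideal (T : TriSet K σ) : Ideal (MvPolynomial σ K) :=
  Ideal.span {p | ∃ e ∈ T.elems, p = e.2}

end TriSet

/-- The saturation `I : J^∞` of an ideal `I` by an element `J`. -/
def satBy (I : Ideal (MvPolynomial σ K)) (J : MvPolynomial σ K) :
    Ideal (MvPolynomial σ K) where
  carrier := {p | ∃ k : ℕ, J ^ k * p ∈ I}
  zero_mem' := ⟨0, by simp⟩
  add_mem' := by
    rintro a b ⟨k, hk⟩ ⟨l, hl⟩
    refine ⟨k + l, ?_⟩
    have h : J ^ (k + l) * (a + b) = J ^ l * (J ^ k * a) + J ^ k * (J ^ l * b) := by ring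
    rw [h]
    exact add_mem (Ideal.mul_mem_left _ _ hk) (Ideal.mul_mem_left _ _ hl)
  smul_mem' := by
    rintro c a ⟨k, hk⟩
    refine ⟨k, ?_⟩
    have h : J ^ k * (c • a) = c * (J ^ k * a) := by rw [smul_eq_mul]; ring
    rw [h]
    exact Ideal.mul_mem_left _ _ hk

namespace TriSet

/-- The saturated ideal `sat(T) = ⟨T⟩ : (∏ initials)^∞` of a triangular set. -/
noncomputable def sat (T : TriSet K σ) : Ideal (MvPolynomial σ K) :=
  satBy T.ideal T.prodInit

/-- The triangular set formed by the first `i` elements of `T`. -/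
def take (T : TriSet K σ) (i : ℕ) : TriSet K σ :=
  ⟨T.elems.take i, T.sorted.sublist (List.take_sublist i T.elems),
    fun e he => T.hlv e (List.mem_of_mem_take he)⟩

/-- `T` is a regular set: each initial is neither zero nor a zero-divisor
modulo the saturated ideal of the preceding subset. -/
def Regular (T : TriSet K σ) : Prop :=
  ∀ i : ℕ, ∀ h : i < T.elems.length,
    initialWrt (T.elems.get ⟨i, h⟩).1 (T.elems.get ⟨i, h⟩).2 ∉ (T.take i).sat ∧
    ∀ p : MvPolynomial σ K,
      initialWrt (T.elems.get ⟨i, h⟩).1 (T.elems.get ⟨i, h⟩).2 * p ∈ (T.take i).sat →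
        p ∈ (T.take i).sat

end TriSet

/-- The zero set, in (the algebraic closure of `K`)^σ, of a set of polynomials. -/
def zeroSet (S : Set (MvPolynomial σ K)) : Set (σ → AlgebraicClosure K) :=
  {x | ∀ p ∈ S, aeval x p = 0}

/-- `Zero(T / ini(T))` : the common zeros of `T` at which no initial of `T` vanishes. -/
def TriSet.zeroQuasi (T : TriSet K σ) : Set (σ → AlgebraicClosure K) :=
  {x | (∀ e ∈ T.elems, aeval x e.2 = 0) ∧
       (∀ e ∈ T.elems, aeval x (initialWrt e.1 e.2) ≠ 0)}

/-- `G` is a (finite) Gröbner basis of `I` with respect to the lex term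
ordering: `G ⊆ I` and the leading monomial of every nonzero element of `I` is
divisible by the leading monomial of some element of `G`. -/
def IsGB (G : Set (MvPolynomial σ K)) (I : Ideal (MvPolynomial σ K)) : Prop :=
  G.Finite ∧ G ⊆ ↑I ∧
  ∀ f ∈ I, f ≠ 0 → ∃ g ∈ G, ∃ mf mg, IsLeadMon f mf ∧ IsLeadMon g mg ∧ ∀ j, mg j ≤ mf j

/-- `G` is the reduced lex Gröbner basis of `I`. -/
def IsReducedGB (G : Set (MvPolynomial σ K)) (I : Ideal (MvPolynomial σ K)) : Prop :=
  IsGB G I ∧ (0 : MvPolynomial σ K) ∉ G ∧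
  (∀ g ∈ G, ∀ m, IsLeadMon g m → g.coeff m = 1) ∧
  (∀ g ∈ G, ∀ g' ∈ G, g' ≠ g → ∀ m ∈ g.support, ∀ m', IsLeadMon g' m' →
    ¬ (∀ j, m' j ≤ m j))

/-- `C` is the W-characteristic set extracted from the (reduced lex Gröbner
basis) `G`: for each leading variable occurring in `G`, `C` contains the
lex-minimal element of `G` with that leading variable. -/
def IsWCharOf (C : TriSet K σ) (G : Set (MvPolynomial σ K)) : Prop :=
  (∀ e ∈ C.elems, e.2 ∈ G ∧
    ∀ g ∈ G, HasLV g e.1 → ∀ mg me, IsLeadMon g mg → IsLeadMon e.2 me → lexLe me mg) ∧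
  (∀ g ∈ G, ∀ i : σ, HasLV g i → i ∈ C.lvs)

/-- The Sylvester-style matrix of two univariate polynomials. -/
noncomputable def sylvester {R : Type*} [CommRing R] (f g : Polynomial R) :
    Matrix (Fin (f.natDegree + g.natDegree)) (Fin (f.natDegree + g.natDegree)) R :=
  Matrix.of fun i j =>
    if (i : ℕ) < g.natDegree then
      (if (i : ℕ) ≤ (j : ℕ) then f.coeff ((j : ℕ) - (i : ℕ)) else 0)
    else
      (if (i : ℕ) - g.natDegree ≤ (j : ℕ) then g.coeff ((j : ℕ) - ((i : ℕ) - g.natDegree))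
       else 0)

/-- The resultant of two univariate polynomials, as the determinant of their
Sylvester matrix. -/
noncomputable def resultantP {R : Type*} [CommRing R] (f g : Polynomial R) : R :=
  (sylvester f g).det

/-- View a multivariate polynomial as a univariate polynomial in the variable `i`. -/
noncomputable def toUni (i : σ) (f : MvPolynomial σ K) :
    Polynomial (MvPolynomial σ K) :=
  aeval (fun j => if j = i then Polynomial.X else Polynomial.C (X j)) f

/-- The resultant of two multivariate polynomials with respect to the variable `i`. -/
noncomputable def resWrt (i : σ) (f g : MvPolynomial σ K) : MvPolynomial σ K :=
  resultantP (toUni i f) (toUni i g)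

/-- The iterated resultant of `f` with respect to a list of
(leading variable, divisor) pairs, used from the head of the list on. -/
noncomputable def iterRes : MvPolynomial σ K → List (σ × MvPolynomial σ K) →
    MvPolynomial σ K
  | f, [] => f
  | f, e :: L => iterRes (resWrt e.1 f e.2) L

end CharDec

open CharDec MvPolynomial

/-! Extend the zero one leading variable at a time. By normality no initial involves a leading
variable, so changing the value of a leading variable keeps every initial nonzero. Hence the next
polynomial, with all its variables but the leading one evaluated, is univariate of positive degree
with nonzero leading coefficient and has a root in the algebraically closed field; the earlier
polynomials only involve smaller variables and stay zero. -/

namespace CharDec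

variable {K : Type*} [Field K] {σ : Type*}

theorem aeval_update_of_notMem_vars {A : Type*} [CommSemiring A] [Algebra K A] [DecidableEq σ]
    {f : MvPolynomial σ K} {v : σ} (hv : v ∉ f.vars) (x : σ → A) (t : A) :
    aeval (Function.update x v t) f = aeval x f :=
  eval₂Hom_congr' rfl
    (fun _ hj _ => Function.update_of_ne (ne_of_mem_of_not_mem hj hv) t x) rfl

theorem monomial_eq_monomial_update_mul_X_pow [DecidableEq σ] (i : σ) (m : σ →₀ ℕ)
    (c : K) :
    monomial m c = monomial (m.update i 0) c * X i ^ m i := by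
  rw [X_pow_eq_monomial, monomial_mul, mul_one, Finsupp.update_eq_erase_add_single,
    Finsupp.single_zero, add_zero, Finsupp.erase_add_single]

variable [LinearOrder σ]

theorem HasLV.notMem_vars_of_lt {f : MvPolynomial σ K} {i v : σ} (h : HasLV f i) (hv : i < v) :
    v ∉ f.vars :=
  fun hv' => (h.2 v hv').not_gt hv

theorem toUni_of_notMem_vars {i : σ} {f : MvPolynomial σ K} (h : i ∉ f.vars) :
    toUni i f = Polynomial.C f := by
  have hg : (fun j => if j = i then Polynomial.X else Polynomial.C (X j)) =
      Function.update (fun j => Polynomial.C (X j)) i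
        (Polynomial.X : Polynomial (MvPolynomial σ K)) := by
    funext j
    simp [Function.update_apply]
  rw [toUni, hg, aeval_update_of_notMem_vars h]
  exact (comp_aeval_apply _ Polynomial.CAlgHom f).symm.trans
    (congrArg Polynomial.C (aeval_X_left_apply f))

theorem toUni_monomial (i : σ) (m : σ →₀ ℕ) (c : K) :
    toUni i (monomial m c) = Polynomial.C (monomial (m.update i 0) c) * Polynomial.X ^ m i := by
  have hi : i ∉ (monomial (m.update i 0) c).vars := by
    rw [mem_vars_iff_mem_support]
    rintro ⟨d, hd, hid⟩
    rw [Finset.mem_singleton.mp (support_monomial_subset hd)] at hid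
    simp at hid
  rw [monomial_eq_monomial_update_mul_X_pow i, ← toUni_of_notMem_vars hi, toUni, toUni, map_mul,
    map_pow, aeval_X, if_pos rfl]

theorem coeff_toUni (i : σ) (d : ℕ) (f : MvPolynomial σ K) :
    (toUni i f).coeff d = coeffWrt i d f := by
  have hsum : toUni i f = ∑ m ∈ f.support, toUni i (monomial m (f.coeff m)) := by
    conv_lhs => rw [f.as_sum]
    exact map_sum _ _ _
  simp only [hsum, Polynomial.finsetSum_coeff, toUni_monomial, Polynomial.coeff_C_mul_X_pow,
    coeffWrt, Finset.sum_filter, eq_comm]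

theorem eval_map_toUni {A : Type*} [CommSemiring A] [Algebra K A] (i : σ) (x : σ → A) (t : A)
    (f : MvPolynomial σ K) :
    ((toUni i f).map (aeval x).toRingHom).eval t = aeval (Function.update x i t) f := by
  rw [Polynomial.eval_map]
  change Polynomial.aevalTower (aeval x) t (toUni i f) = _
  rw [toUni, comp_aeval_apply]
  refine congrArg (aeval · f) (funext fun j => ?_)
  by_cases hj : j = i <;> simp [hj]

theorem exists_aeval_update_eq_zero {A : Type*} [Field A] [IsAlgClosed A] [Algebra K A]
    {f : MvPolynomial σ K} {v : σ} (hv : v ∈ f.vars) {x : σ → A}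
    (hini : aeval x (initialWrt v f) ≠ 0) : ∃ t, aeval (Function.update x v t) f = 0 := by
  set p := (toUni v f).map (aeval x).toRingHom
  have hlead : p.coeff (f.degreeOf v) ≠ 0 := by
    rwa [Polynomial.coeff_map, coeff_toUni]
  have hdeg : p.degree ≠ 0 := fun h => by
    have := Polynomial.le_degree_of_ne_zero hlead
    rw [h, Nat.cast_nonpos] at this
    exact mem_vars_iff_degreeOf_ne_zero.mp hv this
  obtain ⟨t, ht⟩ := IsAlgClosed.exists_root p hdeg
  exact ⟨t, by rwa [← eval_map_toUni]⟩

namespace TriSet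

variable {T : TriSet K σ}

theorem lv_lt_of_mem_take_of_mem_drop {i : ℕ} {e e' : σ × MvPolynomial σ K}
    (he : e ∈ T.elems.take i) (he' : e' ∈ T.elems.drop i) : e.1 < e'.1 := by
  have h := T.sorted
  rw [← List.take_append_drop i T.elems, List.pairwise_append] at h
  exact h.2.2 e he e' he'

theorem Normal.lv_notMem_vars_initialWrt (hT : T.Normal) {e e' : σ × MvPolynomial σ K}
    (he : e ∈ T.elems) (he' : e' ∈ T.elems) : e'.1 ∉ (initialWrt e.1 e.2).vars :=
  fun h => hT e he _ h (List.mem_map_of_mem he')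

theorem Normal.exists_extend_step {A : Type*} [Field A] [IsAlgClosed A] [Algebra K A]
    (hT : T.Normal) {i : ℕ} (hi : i < T.elems.length) {x : σ → A}
    (hx : ∀ e ∈ T.elems.take i, aeval x e.2 = 0)
    (hini : ∀ e ∈ T.elems, aeval x (initialWrt e.1 e.2) ≠ 0) :
    ∃ t, (∀ e ∈ T.elems.take (i + 1), aeval (Function.update x T.elems[i].1 t) e.2 = 0) ∧
      ∀ e ∈ T.elems, aeval (Function.update x T.elems[i].1 t) (initialWrt e.1 e.2) ≠ 0 := by
  set e := T.elems[i]
  have he : e ∈ T.elems := List.getElem_mem hi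
  have he_drop : e ∈ T.elems.drop i := by
    rw [List.drop_eq_getElem_cons hi]
    exact List.mem_cons_self
  obtain ⟨t, ht⟩ := exists_aeval_update_eq_zero (T.hlv e he).1 (hini e he)
  refine ⟨t, fun e' he' => ?_, fun e' he' => ?_⟩
  · rw [List.take_add_one, List.getElem?_eq_getElem hi, Option.toList_some, List.mem_append,
      List.mem_singleton] at he'
    rcases he' with he' | rfl
    · rw [aeval_update_of_notMem_vars ((T.hlv e' (List.mem_of_mem_take he')).notMem_vars_of_lt
        (lv_lt_of_mem_take_of_mem_drop he' he_drop))]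
      exact hx e' he'
    · exact ht
  · rw [aeval_update_of_notMem_vars (hT.lv_notMem_vars_initialWrt he' he)]
    exact hini e' he'

theorem Normal.exists_mem_zeroQuasi (hT : T.Normal) {i : ℕ} (hi : i ≤ T.elems.length)
    (x : σ → AlgebraicClosure K) (hx : ∀ e ∈ T.elems.take i, aeval x e.2 = 0)
    (hini : ∀ e ∈ T.elems, aeval x (initialWrt e.1 e.2) ≠ 0) :
    ∃ y : σ → AlgebraicClosure K,
      (∀ j : σ, (∀ e ∈ T.elems.drop i, j ≠ e.1) → y j = x j) ∧ y ∈ T.zeroQuasi := by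
  obtain rfl | hlt := hi.eq_or_lt
  · exact ⟨x, fun _ _ => rfl, by simpa using hx, hini⟩
  obtain ⟨t, hx', hini'⟩ := hT.exists_extend_step hlt hx hini
  obtain ⟨z, hz, hzT⟩ := hT.exists_mem_zeroQuasi hlt _ hx' hini'
  refine ⟨z, fun j hj => ?_, hzT⟩
  rw [List.drop_eq_getElem_cons hlt] at hj
  rw [hz j fun e he => hj e (List.mem_cons_of_mem _ he)]
  exact Function.update_of_ne (hj _ List.mem_cons_self) t x
termination_by T.elems.length - i

end TriSet

end CharDec

/-- Every normal triangular set has the projection property: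
for each `i`, every common zero of the first `i` elements avoiding the zeros of
all the initials of `N` extends (changing only the leading variables of the
remaining elements) to a zero of the whole of `N` avoiding the zeros of all
the initials. -/
theorem stmt_2 {K : Type*} [Field K] {n : ℕ} (N : TriSet K (Fin n))
    (hnormal : N.Normal) :
    ∀ i : ℕ, i < N.elems.length →
      ∀ x : Fin n → AlgebraicClosure K,
        (∀ e ∈ N.elems.take i, aeval x e.2 = 0) →
        (∀ e ∈ N.elems, aeval x (initialWrt e.1 e.2) ≠ 0) →
        ∃ y : Fin n → AlgebraicClosure K,
          (∀ j : Fin n, (∀ e ∈ N.elems.drop i, j ≠ e.1) → y j = x j) ∧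
          y ∈ N.zeroQuasi :=
  fun _ hi x hx hini => hnormal.exists_mem_zeroQuasi hi.le x hx hini
end

section
/- Let C = [C_1,...,C_r] be a normal triangular set and C* = [C_1, prem(C_2,[C_1]), ..., prem(C_r,[C_1,...,C_{r−1}])]. Then Zero(C* / ini(C*)) = Zero(C / ini(C)), i.e., the zeros of C avoiding the zeros of the initials of C coincide with the zeros of C* avoiding the zeros of the initials of C*. -/
/-!
Pseudo-dividing `C_i` by `C_{i-1}, …, C_1` gives `c · C_i - C_i* ∈ ⟨C_1, …, C_{i-1}⟩`,
where `c` is a product of powers of the initials `I_1, …, I_{i-1}`. Each divisor `C_j` is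
free of the leading variable `z` of `C_i`, and normality keeps the current initial in `z`
free of the leading variable `y_j` of `C_j`. Comparing coefficients of `z^d` in
`I_j^q P = A C_j + R` and using `deg_{y_j} R < deg_{y_j} C_j` shows that the coefficients
of `z^d` in `A` vanish for `d ≥ deg_z P`, so `ini(C_i*) = c · ini(C_i)`. On
`Zero(C_1, …, C_{i-1} / I_1 ⋯ I_{i-1})` the factor `c` does not vanish, so `C_i*` and `C_i`
vanish together, and so do their initials; induction on `i` identifies the two
quasi-varieties.
-/

open MvPolynomial

open CharDec MvPolynomial

theorem forall_iff_forall_of_forall_lt {α : Type*} [Preorder α] [WellFoundedLT α]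
    {p q : α → Prop} (h : ∀ a, (∀ b < a, q b) → (p a ↔ q a)) : (∀ a, p a) ↔ ∀ a, q a := by
  refine ⟨fun hp a => ?_, fun hq a => (h a fun b _ => hq b).2 (hq a)⟩
  induction a using WellFoundedLT.induction with
  | _ a ih => exact (h a ih).1 (hp a)

theorem map_ne_zero_of_mem_closure {M M₀ F : Type*} [Monoid M] [MonoidWithZero M₀]
    [NoZeroDivisors M₀] [Nontrivial M₀] [FunLike F M M₀] [MonoidHomClass F M M₀] (f : F)
    {s : Set M} (hs : ∀ a ∈ s, f a ≠ 0) {a : M} (ha : a ∈ Submonoid.closure s) : f a ≠ 0 := by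
  induction ha using Submonoid.closure_induction with
  | mem a h => exact hs a h
  | one => simp
  | mul a b _ _ ha hb => simpa using mul_ne_zero ha hb

theorem MvPolynomial.eq_zero_of_degreeOf_mul_lt {R σ : Type*} [CommSemiring R] [NoZeroDivisors R]
    {i : σ} {p q : MvPolynomial σ R} (h : degreeOf i (p * q) < degreeOf i q) : p = 0 := by
  by_contra hp
  have hq : q ≠ 0 := ne_zero_of_degreeOf_ne_zero (i := i) (by omega)
  rw [degreeOf_mul_eq hp hq] at h
  omega

namespace CharDec

variable {K : Type*} [Field K] {σ : Type*} [LinearOrder σ]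

theorem coeff_coeffWrt (i : σ) (d : ℕ) (f : MvPolynomial σ K) (m : σ →₀ ℕ) :
    coeff m (coeffWrt i d f) = if m i = 0 then coeff (m.update i d) f else 0 := by
  have key : ∀ m' : σ →₀ ℕ, (m' i = d ∧ m'.update i 0 = m) ↔ (m i = 0 ∧ m' = m.update i d) := by
    intro m'
    constructor
    · rintro ⟨rfl, rfl⟩
      simp
    · rintro ⟨hm, rfl⟩
      simp [← hm]
  rw [coeffWrt, coeff_sum, Finset.sum_filter]
  simp_rw [coeff_monomial, ← ite_and, key]
  split_ifs with hm <;> simp +contextual [hm, eq_comm]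

theorem mem_support_coeffWrt {i : σ} {d : ℕ} {f : MvPolynomial σ K} {m : σ →₀ ℕ} :
    m ∈ (coeffWrt i d f).support ↔ m i = 0 ∧ m.update i d ∈ f.support := by
  simp only [mem_support_iff, coeff_coeffWrt]
  split_ifs with hm <;> simp [hm]

theorem coeffWrt_add (i : σ) (d : ℕ) (f g : MvPolynomial σ K) :
    coeffWrt i d (f + g) = coeffWrt i d f + coeffWrt i d g := by
  ext m
  simp only [coeff_add, coeff_coeffWrt]
  split_ifs <;> simp

noncomputable def coeffWrtAddMonoidHom (i : σ) (d : ℕ) : MvPolynomial σ K →+ MvPolynomial σ K :=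
  AddMonoidHom.mk' (coeffWrt i d) (coeffWrt_add i d)

theorem coeffWrt_mul_monomial {i : σ} {b : σ →₀ ℕ} (hb : b i = 0) (d : ℕ)
    (f : MvPolynomial σ K) (c : K) :
    coeffWrt i d (f * monomial b c) = coeffWrt i d f * monomial b c := by
  ext m
  have hle : b ≤ m.update i d ↔ b ≤ m := by
    simp only [Finsupp.le_def]
    refine forall_congr' fun j => ?_
    by_cases hj : j = i <;> simp [Finsupp.update_apply, hj, hb]
  have hsub : m.update i d - b = (m - b).update i d := by
    ext j
    by_cases hj : j = i <;> simp [Finsupp.update_apply, hj, hb]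
  simp only [coeff_coeffWrt, coeff_mul_monomial', hle, hsub, Finsupp.tsub_apply, hb, tsub_zero]
  split_ifs <;> simp

theorem coeffWrt_mul_of_notMem_vars {i : σ} {g : MvPolynomial σ K} (hg : i ∉ g.vars) (d : ℕ)
    (f : MvPolynomial σ K) : coeffWrt i d (f * g) = coeffWrt i d f * g := by
  conv_lhs => rw [g.as_sum, Finset.mul_sum]
  conv_rhs => rw [g.as_sum, Finset.mul_sum]
  exact (map_sum (coeffWrtAddMonoidHom i d) _ _).trans (Finset.sum_congr rfl fun b hb =>
    coeffWrt_mul_monomial (mem_support_notMem_vars_zero hb hg) d f _)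

theorem coeffWrt_eq_zero_of_degreeOf_lt {i : σ} {d : ℕ} {f : MvPolynomial σ K}
    (h : degreeOf i f < d) : coeffWrt i d f = 0 := by
  ext m
  rw [coeff_coeffWrt, coeff_zero]
  split_ifs
  · exact notMem_support_iff.mp (notMem_support_of_degreeOf_lt i (by simpa using h))
  · rfl

theorem initialWrt_ne_zero {i : σ} {f : MvPolynomial σ K} (hf : f ≠ 0) :
    initialWrt i f ≠ 0 := by
  obtain ⟨m, hm, hmax⟩ :=
    Finset.exists_mem_eq_sup f.support (support_nonempty.mpr hf) (fun m => m i)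
  rw [← degreeOf_eq_sup] at hmax
  have : m.update i 0 ∈ (initialWrt i f).support :=
    mem_support_coeffWrt.mpr ⟨by simp, by simpa [hmax] using hm⟩
  exact support_nonempty.mp ⟨_, this⟩

theorem degreeOf_eq_of_coeffWrt_ne_zero {i : σ} {d : ℕ} {f : MvPolynomial σ K}
    (hd : coeffWrt i d f ≠ 0) (hgt : ∀ e, d < e → coeffWrt i e f = 0) : degreeOf i f = d := by
  obtain ⟨m, hm⟩ := support_nonempty.mpr hd
  obtain ⟨-, hm⟩ := mem_support_coeffWrt.mp hm
  have hf : f ≠ 0 := by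
    rintro rfl
    simp at hm
  refine le_antisymm (not_lt.mp fun hlt => initialWrt_ne_zero hf (hgt _ hlt)) ?_
  simpa using monomial_le_degreeOf i hm

theorem notMem_vars_coeffWrt (i : σ) (d : ℕ) (f : MvPolynomial σ K) :
    i ∉ (coeffWrt i d f).vars := by
  rw [mem_vars_iff_degreeOf_ne_zero, not_not, ← Nat.le_zero, degreeOf_le_iff]
  exact fun m hm => (mem_support_coeffWrt.mp hm).1.le

theorem degreeOf_coeffWrt_le {i j : σ} (hji : j ≠ i) (d : ℕ) (f : MvPolynomial σ K) :
    degreeOf j (coeffWrt i d f) ≤ degreeOf j f :=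
  degreeOf_le_iff.mpr fun m hm => by
    simpa [hji] using monomial_le_degreeOf j (mem_support_coeffWrt.mp hm).2

theorem vars_coeffWrt_subset (i : σ) (d : ℕ) (f : MvPolynomial σ K) :
    (coeffWrt i d f).vars ⊆ f.vars := by
  intro j hj
  have hji : j ≠ i := by
    rintro rfl
    exact notMem_vars_coeffWrt j d f hj
  rw [mem_vars_iff_degreeOf_ne_zero] at hj ⊢
  exact fun h => hj (Nat.eq_zero_of_le_zero (h ▸ degreeOf_coeffWrt_le hji d f))

variable {y z : σ} {P Q R : MvPolynomial σ K}

theorem IsPrem.coeffWrt_eq (hpr : IsPrem y Q P R) (hQy : y ∈ Q.vars) (hQz : z ∉ Q.vars)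
    {d : ℕ} (hPd : y ∉ (coeffWrt z d P).vars) :
    coeffWrt z d R =
      initialWrt y Q ^ (P.degreeOf y + 1 - Q.degreeOf y) * coeffWrt z d P := by
  obtain ⟨A, hdiv, hR⟩ := hpr
  set J := initialWrt y Q ^ (P.degreeOf y + 1 - Q.degreeOf y)
  have hyz : y ≠ z := fun h => hQz (h ▸ hQy)
  have hJz : z ∉ J.vars := fun h => hQz (vars_coeffWrt_subset _ _ _ (vars_pow _ _ h))
  have hJy : y ∉ J.vars := fun h => notMem_vars_coeffWrt _ _ _ (vars_pow _ _ h)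
  have hd : coeffWrt z d A * Q = J * coeffWrt z d P - coeffWrt z d R := by
    have h := congrArg (coeffWrt z d) hdiv
    rw [mul_comm, coeffWrt_mul_of_notMem_vars hJz, coeffWrt_add,
      coeffWrt_mul_of_notMem_vars hQz] at h
    rw [mul_comm J, h, add_sub_cancel_right]
  have hA : coeffWrt z d A = 0 := by
    refine eq_zero_of_degreeOf_mul_lt (i := y) (q := Q) ?_
    rw [hd]
    refine (degreeOf_sub_le y _ _).trans_lt (max_lt ?_ ?_)
    · have hJP : y ∉ (J * coeffWrt z d P).vars := fun h =>
        (Finset.mem_union.mp (vars_mul _ _ h)).elim hJy hPd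
      rw [mem_vars_iff_degreeOf_ne_zero, not_not] at hJP
      rw [hJP]
      exact Nat.pos_of_ne_zero (mem_vars_iff_degreeOf_ne_zero.mp hQy)
    · exact (degreeOf_coeffWrt_le hyz d R).trans_lt hR
  rw [hA, zero_mul, eq_comm, sub_eq_zero] at hd
  exact hd.symm

theorem IsPrem.initialWrt_eq (hpr : IsPrem y Q P R) (hQy : y ∈ Q.vars) (hQz : z ∉ Q.vars)
    (hP : initialWrt z P ≠ 0) (hPy : y ∉ (initialWrt z P).vars) :
    initialWrt z R =
      initialWrt y Q ^ (P.degreeOf y + 1 - Q.degreeOf y) * initialWrt z P := by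
  set J := initialWrt y Q ^ (P.degreeOf y + 1 - Q.degreeOf y)
  have hcoeff : ∀ d, degreeOf z P ≤ d → coeffWrt z d R = J * coeffWrt z d P := by
    intro d hd
    refine hpr.coeffWrt_eq hQy hQz ?_
    rcases hd.eq_or_lt with rfl | hlt
    · exact hPy
    · simp [coeffWrt_eq_zero_of_degreeOf_lt hlt]
  have hJ : J ≠ 0 := pow_ne_zero _ (initialWrt_ne_zero (by rintro rfl; simp at hQy))
  have hdeg : degreeOf z R = degreeOf z P :=
    degreeOf_eq_of_coeffWrt_ne_zero (by rw [hcoeff _ le_rfl]; exact mul_ne_zero hJ hP)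
      fun e he => by rw [hcoeff e he.le, coeffWrt_eq_zero_of_degreeOf_lt he, mul_zero]
  rw [initialWrt, hdeg, hcoeff _ le_rfl]
  rfl

theorem IterPrem.exists_mul_sub_mem_span {z : σ} {params : Set σ}
    {L : List (σ × MvPolynomial σ K)}
    (hL : ∀ e ∈ L, e.1 ∈ e.2.vars ∧ z ∉ e.2.vars ∧ e.1 ∉ params ∧
      ↑(initialWrt e.1 e.2).vars ⊆ params)
    (hP : initialWrt z P ≠ 0) (hParams : ↑(initialWrt z P).vars ⊆ params)
    (hR : IterPrem P L R) :
    ∃ c ∈ Submonoid.closure {I | ∃ e ∈ L, I = initialWrt e.1 e.2},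
      c * P - R ∈ Ideal.span {p | ∃ e ∈ L, p = e.2} ∧
        initialWrt z R = c * initialWrt z P := by
  induction L generalizing P with
  | nil =>
    obtain rfl : R = P := hR
    exact ⟨1, one_mem _, by simp, (one_mul _).symm⟩
  | cons e L ih =>
    obtain ⟨S, hS, hSR⟩ := hR
    obtain ⟨hlv, hz, heParams, heIni⟩ := hL e List.mem_cons_self
    set J := initialWrt e.1 e.2 ^ (P.degreeOf e.1 + 1 - e.2.degreeOf e.1)
    have hSini : initialWrt z S = J * initialWrt z P :=
      hS.initialWrt_eq hlv hz hP fun h => heParams (hParams h)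
    have hJ : J ≠ 0 := pow_ne_zero _ (initialWrt_ne_zero fun h => by simp [h] at hlv)
    have hJParams : ↑J.vars ⊆ params := fun j hj => heIni (vars_pow _ _ hj)
    obtain ⟨c, hc, hspan, hcini⟩ := ih (fun e' he' => hL e' (List.mem_cons_of_mem _ he'))
      (hSini ▸ mul_ne_zero hJ hP)
      (fun j hj => (Finset.mem_union.mp (vars_mul _ _ (hSini ▸ hj))).elim
        (fun h => hJParams h) (fun h => hParams h))
      hSR
    obtain ⟨A, hdiv, -⟩ := hS
    refine ⟨c * J, ?_, ?_, by rw [hcini, hSini, mul_assoc]⟩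
    · refine mul_mem (Submonoid.closure_mono ?_ hc) (pow_mem (Submonoid.subset_closure ?_) _)
      · rintro _ ⟨e', he', rfl⟩
        exact ⟨e', List.mem_cons_of_mem _ he', rfl⟩
      · exact ⟨e, List.mem_cons_self, rfl⟩
    · have hsplit : c * J * P - R = c * A * e.2 + (c * S - R) := by
        rw [mul_assoc, hdiv]
        ring
      rw [hsplit]
      refine add_mem (Ideal.mul_mem_left _ _ (Ideal.subset_span ⟨e, List.mem_cons_self, rfl⟩))
        (Ideal.span_mono ?_ hspan)
      rintro _ ⟨e', he', rfl⟩
      exact ⟨e', List.mem_cons_of_mem _ he', rfl⟩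

theorem TriSet.Normal.exists_mul_sub_mem_ideal_take {C : TriSet K σ} (hC : C.Normal)
    (i : Fin C.elems.length) (hR : IterPrem (C.elems.get i).2 (C.elems.take i).reverse R) :
    ∃ c ∈ Submonoid.closure {I | ∃ e ∈ C.elems.take i, I = initialWrt e.1 e.2},
      c * (C.elems.get i).2 - R ∈ (C.take i).ideal ∧
        initialWrt (C.elems.get i).1 R = c * initialWrt (C.elems.get i).1 (C.elems.get i).2 := by
  set E := C.elems.get i
  have hE : E ∈ C.elems := List.get_mem _ _
  have hlt : ∀ e ∈ C.elems.take i, e.1 < E.1 := by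
    intro e he
    obtain ⟨j, hj, rfl⟩ := List.mem_take_iff_getElem.mp he
    exact List.pairwise_iff_getElem.mp C.sorted j i _ _ (by omega)
  have hL : ∀ e ∈ (C.elems.take i).reverse, e.1 ∈ e.2.vars ∧ E.1 ∉ e.2.vars ∧
      e.1 ∉ {j | C.IsParam j} ∧ ↑(initialWrt e.1 e.2).vars ⊆ {j | C.IsParam j} := by
    intro e he
    rw [List.mem_reverse] at he
    have heC := List.mem_of_mem_take he
    exact ⟨(C.hlv e heC).1, fun h => (hlt e he).not_ge ((C.hlv e heC).2 _ h),
      fun h => h (List.mem_map_of_mem heC), hC e heC⟩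
  simpa only [List.mem_reverse, TriSet.ideal, TriSet.take] using hR.exists_mul_sub_mem_span hL
    (initialWrt_ne_zero fun h => by simpa [h] using (C.hlv E hE).1) (hC E hE)

theorem TriSet.aeval_eq_zero_of_mem_ideal {T : TriSet K σ} {x : σ → AlgebraicClosure K}
    (hx : ∀ e ∈ T.elems, aeval x e.2 = 0) {p : MvPolynomial σ K} (hp : p ∈ T.ideal) :
    aeval x p = 0 := by
  have hker : T.ideal ≤ RingHom.ker (aeval x) :=
    Ideal.span_le.mpr fun _ ⟨e, he, hpe⟩ => hpe ▸ hx e he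
  exact hker hp

theorem TriSet.Normal.aeval_iterPrem_iff {C : TriSet K σ} (hC : C.Normal)
    (i : Fin C.elems.length) (hR : IterPrem (C.elems.get i).2 (C.elems.take i).reverse R)
    {x : σ → AlgebraicClosure K} (hx : x ∈ (C.take i).zeroQuasi) :
    (aeval x R = 0 ∧ aeval x (initialWrt (C.elems.get i).1 R) ≠ 0) ↔
      (aeval x (C.elems.get i).2 = 0 ∧
        aeval x (initialWrt (C.elems.get i).1 (C.elems.get i).2) ≠ 0) := by
  obtain ⟨c, hc, hspan, hini⟩ := hC.exists_mul_sub_mem_ideal_take i hR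
  have hc0 : aeval x c ≠ 0 :=
    map_ne_zero_of_mem_closure (aeval x) (by rintro _ ⟨e, he, rfl⟩; exact hx.2 e he) hc
  have hcR := TriSet.aeval_eq_zero_of_mem_ideal hx.1 hspan
  rw [map_sub, sub_eq_zero] at hcR
  rw [← hcR, hini, map_mul, map_mul]
  simp [hc0]

end CharDec

/-- Let `C = [C_1,…,C_r]` be a normal triangular set (with
its parameters ordered before its leading variables) and
`C* = [C_1, prem(C_2,[C_1]), …, prem(C_r,[C_1,…,C_{r−1}])]`. Then
`Zero(C*/ini(C*)) = Zero(C/ini(C))`. -/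
theorem stmt_10 {K : Type*} [Field K] {n : ℕ} (C : TriSet K (Fin n))
    (hnormal : C.Normal)
    (Cs : List (MvPolynomial (Fin n) K)) (hlen : Cs.length = C.elems.length)
    (hprem : ∀ i : ℕ, ∀ h : i < C.elems.length,
      IterPrem (C.elems.get ⟨i, h⟩).2 ((C.elems.take i).reverse)
        (Cs.get ⟨i, by omega⟩)) :
    {x : Fin n → AlgebraicClosure K |
      ∀ i : ℕ, ∀ h : i < C.elems.length,
        aeval x (Cs.get ⟨i, by omega⟩) = 0 ∧
        aeval x (initialWrt (C.elems.get ⟨i, h⟩).1 (Cs.get ⟨i, by omega⟩)) ≠ 0} =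
      C.zeroQuasi := by
  ext x
  have hC : x ∈ C.zeroQuasi ↔ ∀ i : Fin C.elems.length, aeval x (C.elems.get i).2 = 0 ∧
      aeval x (initialWrt (C.elems.get i).1 (C.elems.get i).2) ≠ 0 := by
    simp only [TriSet.zeroQuasi, Set.mem_ofPred_eq, List.forall_mem_iff_get, forall_and]
  rw [hC, Set.mem_ofPred_eq]
  let p (i : Fin C.elems.length) : Prop := aeval x (Cs.get ⟨i, hlen.symm ▸ i.2⟩) = 0 ∧
    aeval x (initialWrt (C.elems.get i).1 (Cs.get ⟨i, hlen.symm ▸ i.2⟩)) ≠ 0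
  refine (Fin.forall_iff (p := p)).symm.trans (forall_iff_forall_of_forall_lt fun i hprev =>
    hnormal.aeval_iterPrem_iff i (hprem i i.2) ?_)
  constructor <;> intro e he <;> obtain ⟨j, hj, rfl⟩ := List.mem_take_iff_getElem.mp he
  · exact (hprev ⟨j, by omega⟩ (Fin.mk_lt_of_lt_val (by omega))).1
  · exact (hprev ⟨j, by omega⟩ (Fin.mk_lt_of_lt_val (by omega))).2
end
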